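/- If M ∈ 𝓜(6,7,C) with |C| = 19 and some colour has frequency at least 5, then c₃₊ + c₄₊ ≤ 3, where c₃₊ (resp. c₄₊) is the number of colours of frequency at least 3 (resp. at least 4). -/

import Mathlib

/-!
A colour occurring only once shares a line with each of the 18 other colours, so all of them lie
in its row or its column, which hold only 11 further entries; hence every frequency is at least 2.
The frequencies sum to 42 = 2 · 19 + 4, and a colour of frequency `f ≥ 2` uses up at least
`[f ≥ 3] + [f ≥ 4] + [f ≥ 5]` of this surplus of 4, the colour of frequency at least 5 taking
one unit more than it contributes to `c₃₊ + c₄₊`.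
-/

/-- `M ∈ 𝓜(p,q,C)`: all lines of `M` have pairwise distinct entries and every
pair of distinct colours of `C` is row-based or column-based in `M`. -/
def MemM {p q : ℕ} {C : Type*} (M : Fin p → Fin q → C) : Prop :=
  (∀ i, Function.Injective (M i)) ∧
  (∀ j, Function.Injective fun i => M i j) ∧
  ∀ c₁ c₂ : C, c₁ ≠ c₂ →
    (∃ i j₁ j₂, M i j₁ = c₁ ∧ M i j₂ = c₂) ∨
    (∃ i₁ i₂ j, M i₁ j = c₁ ∧ M i₂ j = c₂)

/-- The frequency of a colour: its number of occurrences as an entry of `M`. -/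
noncomputable def freq {C : Type*} (M : Fin 6 → Fin 7 → C) (γ : C) : ℕ :=
  Nat.card {x : Fin 6 × Fin 7 // M x.1 x.2 = γ}

open Finset

theorem sum_card_fiber_eq_mul {p q : ℕ} {C : Type*} [Fintype C] (M : Fin p → Fin q → C) :
    ∑ c : C, Nat.card {x : Fin p × Fin q // M x.1 x.2 = c} = p * q := by
  rw [← Nat.card_sigma, Nat.card_congr (Equiv.sigmaFiberEquiv _)]
  simp

theorem two_mul_card_add_card_filter_le_sum {ι : Type*} (s : Finset ι) (f : ι → ℕ)
    (hf : ∀ i ∈ s, 2 ≤ f i) :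
    2 * #s + #{i ∈ s | 3 ≤ f i} + #{i ∈ s | 4 ≤ f i} + #{i ∈ s | 5 ≤ f i} ≤ ∑ i ∈ s, f i := by
  simp only [card_filter, card_eq_sum_ones (s := s), mul_sum, ← sum_add_distrib]
  refine sum_le_sum fun i hi => ?_
  have := hf i hi
  split_ifs <;> omega

namespace MemM

variable {p q : ℕ} {C : Type*} {M : Fin p → Fin q → C}

theorem exists_eq [Nontrivial C] (hM : MemM M) (c : C) : ∃ i j, M i j = c := by
  obtain ⟨c', hc'⟩ := exists_ne c
  rcases hM.2.2 c c' hc'.symm with ⟨i, j, -, hc, -⟩ | ⟨i, -, j, hc, -⟩ <;> exact ⟨i, j, hc⟩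

theorem one_lt_card_fiber [Fintype C] [Nontrivial C] (hM : MemM M) (hC : p + q < Fintype.card C) (c : C) :
    1 < Nat.card {x : Fin p × Fin q // M x.1 x.2 = c} := by
  by_contra! hle
  obtain ⟨i₀, j₀, hc₀⟩ := hM.exists_eq c
  have hunique : ∀ i j, M i j = c → i = i₀ ∧ j = j₀ := fun i j hc => by
    have := (Finite.card_le_one_iff_subsingleton.mp hle).elim
      (⟨(i, j), hc⟩ : {x : Fin p × Fin q // M x.1 x.2 = c}) ⟨(i₀, j₀), hc₀⟩
    simpa using this
  have hsurj : Function.Surjective (Sum.elim (M i₀) fun i => M i j₀) := by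
    intro c'
    by_cases hcc' : c = c'
    · exact ⟨.inl j₀, hc₀.trans hcc'⟩
    rcases hM.2.2 c c' hcc' with ⟨i, j, j', hc, hc'⟩ | ⟨i, i', j, hc, hc'⟩
    · exact ⟨.inl j', by simpa [(hunique i j hc).1] using hc'⟩
    · exact ⟨.inr i', by simpa [(hunique i j hc).2] using hc'⟩
  have := Fintype.card_le_of_surjective _ hsurj
  simp only [Fintype.card_sum, Fintype.card_fin] at this
  omega

end MemM

theorem c3plus_add_c4plus_le_three {C : Type*} [Fintype C]
    (M : Fin 6 → Fin 7 → C) (hM : MemM M) (hC : Fintype.card C = 19)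
    (h5 : ∃ c : C, 5 ≤ freq M c) :
    Nat.card {c : C // 3 ≤ freq M c} + Nat.card {c : C // 4 ≤ freq M c} ≤ 3 := by
  classical
  obtain ⟨c₀, hc₀⟩ := h5
  have : Nontrivial C := Fintype.one_lt_card_iff_nontrivial.mp (by omega)
  have hcount := two_mul_card_add_card_filter_le_sum univ (freq M)
    fun c _ => hM.one_lt_card_fiber (by omega) c
  have hsum : ∑ c, freq M c = 42 := sum_card_fiber_eq_mul M
  have hfive : 0 < #{c | 5 ≤ freq M c} := card_pos.mpr ⟨c₀, by simpa using hc₀⟩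
  simp only [Nat.card_eq_fintype_card, Fintype.card_subtype]
  rw [card_univ, hC, hsum] at hcount
  omega
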